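/- arXiv:1201.3928 — 2 statements merged into one kernel-verified Lean document; each statement's English description precedes it below -/
import Mathlib

section
/- For any symbols P(λ) = Σ_{n≤N} pₙλⁿ and Q(λ) = Σ_{n≤M} qₙλⁿ with coefficients in R, one has Res_λ P(λ)Q(−λ) dλ = h · Res_∂ ( P(h∂) · Q(h∂)* ); explicitly, Σ_{i+j=−1} (−1)ʲ pᵢ qⱼ = h · Res_∂ ( P(h∂) · Q(h∂)* ). -/
open scoped BigOperators

/-- Generalized binomial coefficient `C(k,l) = k(k-1)⋯(k-l+1)/l!` for `k : ℤ`. -/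
def gbinom (k : ℤ) (l : ℕ) : ℚ :=
  (∏ i ∈ Finset.range l, ((k : ℚ) - i)) / (Nat.factorial l)

/-- Pseudo-differential operators (and symbols): coefficient functions `ℤ → R`
with support bounded above.  The parameter `d` (the derivation) determines the product. -/
structure PDO (R : Type) [CommRing R] [Algebra ℚ R] (d : R →+ R) where
  coeff : ℤ → R
  bdd : ∃ N : ℤ, ∀ n : ℤ, N < n → coeff n = 0

namespace PDO

variable {R : Type} [CommRing R] [Algebra ℚ R] {d : R →+ R}

theorem ext' {A B : PDO R d} (h : A.coeff = B.coeff) : A = B := by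
  cases A; cases B; cases h; rfl

set_option linter.unusedSectionVars false in
theorem iterD_zero (d : R →+ R) (j : ℕ) : d^[j] (0 : R) = 0 := by
  induction j with
  | zero => rfl
  | succ j ih => rw [Function.iterate_succ_apply', ih, map_zero]

instance : Zero (PDO R d) := ⟨⟨fun _ => 0, ⟨0, fun _ _ => rfl⟩⟩⟩

instance : One (PDO R d) :=
  ⟨⟨fun n => if n = 0 then 1 else 0, ⟨0, fun n hn => if_neg (by omega)⟩⟩⟩

instance : Add (PDO R d) :=
  ⟨fun A B => ⟨fun n => A.coeff n + B.coeff n, by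
    obtain ⟨N, hN⟩ := A.bdd
    obtain ⟨M, hM⟩ := B.bdd
    exact ⟨max N M, fun n hn => by
      show A.coeff n + B.coeff n = 0
      rw [hN n (lt_of_le_of_lt (le_max_left N M) hn),
        hM n (lt_of_le_of_lt (le_max_right N M) hn), add_zero]⟩⟩⟩

instance : Neg (PDO R d) :=
  ⟨fun A => ⟨fun n => -A.coeff n, by
    obtain ⟨N, hN⟩ := A.bdd
    exact ⟨N, fun n hn => by show -A.coeff n = 0; rw [hN n hn, neg_zero]⟩⟩⟩

instance : SMul ℚ (PDO R d) :=
  ⟨fun c A => ⟨fun n => c • A.coeff n, by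
    obtain ⟨N, hN⟩ := A.bdd
    exact ⟨N, fun n hn => by show c • A.coeff n = 0; rw [hN n hn, smul_zero]⟩⟩⟩

instance : AddCommGroup (PDO R d) where
  add := (· + ·)
  zero := 0
  neg := Neg.neg
  add_assoc A B C := ext' (funext fun n => add_assoc (A.coeff n) (B.coeff n) (C.coeff n))
  zero_add A := ext' (funext fun n => zero_add (A.coeff n))
  add_zero A := ext' (funext fun n => add_zero (A.coeff n))
  add_comm A B := ext' (funext fun n => add_comm (A.coeff n) (B.coeff n))
  neg_add_cancel A := ext' (funext fun n => neg_add_cancel (A.coeff n))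
  nsmul := nsmulRec
  zsmul := zsmulRec

/-- The product of pseudo-differential operators, determined by the commutation rule
`∂^k · f = Σ_{l ≥ 0} C(k,l) (∂^l f) ∂^(k-l)`. -/
noncomputable instance : Mul (PDO R d) :=
  ⟨fun A B =>
    ⟨fun n => ∑ᶠ (k : ℤ) (m : ℤ),
        if _ : 0 ≤ k + m - n then
          A.coeff k * (gbinom k (k + m - n).toNat • (d^[(k + m - n).toNat] (B.coeff m)))
        else 0, by
      obtain ⟨N, hN⟩ := A.bdd
      obtain ⟨M, hM⟩ := B.bdd
      refine ⟨N + M, fun n hn => ?_⟩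
      have hz : ∀ k m : ℤ,
          (if _ : 0 ≤ k + m - n then
            A.coeff k * (gbinom k (k + m - n).toNat • (d^[(k + m - n).toNat] (B.coeff m)))
          else 0) = 0 := by
        intro k m
        by_cases hl : 0 ≤ k + m - n
        · rw [dif_pos hl]
          by_cases hk : N < k
          · rw [hN k hk, zero_mul]
          · rw [hM m (by omega), iterD_zero, smul_zero, mul_zero]
        · rw [dif_neg hl]
      simp only [hz, finsum_zero]⟩⟩

noncomputable def npow (A : PDO R d) : ℕ → PDO R d
  | 0 => 1
  | n + 1 => npow A n * A

noncomputable instance : Pow (PDO R d) ℕ := ⟨fun A n => A.npow n⟩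

/-- The monomial `r ∂^k`. -/
def mono (r : R) (k : ℤ) : PDO R d :=
  ⟨fun n => if n = k then r else 0, ⟨k, fun n hn => if_neg (by omega)⟩⟩

/-- The constant (order-zero) operator `r`. -/
def const (r : R) : PDO R d := mono r 0

/-- The operator `∂`. -/
def del : PDO R d := mono (1 : R) 1

/-- The operator `h∂`. -/
def hdel (h : Rˣ) : PDO R d := mono (h : R) 1

/-- The Lax operator `L = h²∂² + 2u`. -/
def Lop (h : Rˣ) (u : R) : PDO R d :=
  ⟨fun n => if n = 2 then (h : R) ^ 2 else if n = 0 then 2 * u else 0,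
   ⟨2, fun n hn => by
      show (if n = 2 then (h : R) ^ 2 else if n = 0 then 2 * u else 0) = 0
      rw [if_neg (by omega), if_neg (by omega)]⟩⟩

/-- The differential part `A₊`. -/
def pos (A : PDO R d) : PDO R d :=
  ⟨fun n => if 0 ≤ n then A.coeff n else 0, by
    obtain ⟨N, hN⟩ := A.bdd
    refine ⟨N, fun n hn => ?_⟩
    show (if 0 ≤ n then A.coeff n else 0) = 0
    by_cases h0 : (0 : ℤ) ≤ n
    · rw [if_pos h0]; exact hN n hn
    · rw [if_neg h0]⟩

/-- The integral part `A₋ = A − A₊`. -/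
def negp (A : PDO R d) : PDO R d :=
  ⟨fun n => if n < 0 then A.coeff n else 0, ⟨0, fun n hn => if_neg (by omega)⟩⟩

/-- The residue `Res_∂ A = a₋₁`. -/
def res (A : PDO R d) : R := A.coeff (-1)

/-- The formal adjoint, determined by `(f ∂^k)* = (−∂)^k · f`. -/
noncomputable def adj (A : PDO R d) : PDO R d :=
  ⟨fun n => ∑ᶠ k : ℤ,
      if _ : 0 ≤ k - n then
        (((-1 : ℚ) ^ k) * gbinom k (k - n).toNat) • (d^[(k - n).toNat] (A.coeff k))
      else 0, by
    obtain ⟨N, hN⟩ := A.bdd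
    refine ⟨N, fun n hn => ?_⟩
    have hz : ∀ k : ℤ, (if _ : 0 ≤ k - n then
        (((-1 : ℚ) ^ k) * gbinom k (k - n).toNat) • (d^[(k - n).toNat] (A.coeff k))
      else 0) = 0 := by
      intro k
      by_cases hl : 0 ≤ k - n
      · rw [dif_pos hl, hN k (by omega), iterD_zero, smul_zero]
      · rw [dif_neg hl]
    simp only [hz, finsum_zero]⟩

/-- The operator `P(h∂) = Σ pₙ hⁿ ∂ⁿ` associated to the symbol `P(λ) = Σ pₙ λⁿ`. -/
noncomputable def ofSymbol (h : Rˣ) (A : PDO R d) : PDO R d :=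
  ⟨fun n => A.coeff n * ((h ^ n : Rˣ) : R), by
    obtain ⟨N, hN⟩ := A.bdd
    exact ⟨N, fun n hn => by show A.coeff n * ((h ^ n : Rˣ) : R) = 0; rw [hN n hn, zero_mul]⟩⟩

/-- Apply `d^[i]` to each coefficient. -/
def mapD (i : ℕ) (A : PDO R d) : PDO R d :=
  ⟨fun n => d^[i] (A.coeff n), by
    obtain ⟨N, hN⟩ := A.bdd
    exact ⟨N, fun n hn => by show d^[i] (A.coeff n) = 0; rw [hN n hn, iterD_zero]⟩⟩

/-- The coefficientwise extension of an additive map `D : R →+ R`. -/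
def mapHom (D : R →+ R) (A : PDO R d) : PDO R d :=
  ⟨fun n => D (A.coeff n), by
    obtain ⟨N, hN⟩ := A.bdd
    exact ⟨N, fun n hn => by show D (A.coeff n) = 0; rw [hN n hn, map_zero]⟩⟩

/-- The commutator `[A, B] = AB − BA`. -/
noncomputable def comm (A B : PDO R d) : PDO R d := A * B - B * A

end PDO

/-- The Leibniz rule: `d` is a derivation. -/
def Leibniz {R : Type} [CommRing R] [Algebra ℚ R] (d : R →+ R) : Prop :=
  ∀ a b : R, d (a * b) = a * d b + b * d a

/-- `aₙ = 1/(2n+1)!!`. -/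
def kdvA (n : ℕ) : ℚ := 1 / (Nat.doubleFactorial (2 * n + 1))

/-- `bₙ = (2n−1)!!` (with `b₀ = (−1)!! = 1`). -/
def kdvB (n : ℕ) : ℚ := (Nat.doubleFactorial (2 * n - 1) : ℕ)

/-!
Expanding the product and adjoint formulas, `Res_∂ (∂ᵏ · B*)` becomes
`Σ_{m,j} C(k, k+m+1) C(j, j-m) (-1)ʲ ∂^{k+j+1} b_j`. Summing over `m` by Chu–Vandermonde
leaves `C(k+j, k+j+1)`, which vanishes unless `k + j = -1`; hence
`Res_∂ (A · B*) = Σ_{i+j=-1} (-1)ʲ a_i b_j`. For `A = P(h∂)`, `B = Q(h∂)` the powers of `h`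
contribute `hⁱ hʲ = h⁻¹`.
-/

open Finset

lemma gbinom_eq_ringChoose (k : ℤ) (t : ℕ) : gbinom k t = Ring.choose (k : ℚ) t := by
  rw [Ring.choose_eq_smul, gbinom, ← descPochhammer_eval_eq_prod_range,
    ← Polynomial.aeval_eq_smeval, Polynomial.aeval_def, ← Polynomial.eval_map, descPochhammer_map,
    smul_eq_mul, inv_mul_eq_div]

lemma gbinom_eq_zero_of_lt {z : ℤ} (hz : 0 ≤ z) {t : ℕ} (ht : z < t) : gbinom z t = 0 := by
  rw [gbinom_eq_ringChoose, ← Int.toNat_of_nonneg hz, Int.cast_natCast, Ring.choose_natCast,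
    Nat.choose_eq_zero_of_lt (by omega), Nat.cast_zero]

lemma gbinom_add_one_toNat {z : ℤ} (hz : -1 ≤ z) :
    gbinom z (z + 1).toNat = if z = -1 then 1 else 0 := by
  split_ifs with h
  · simp [h, gbinom]
  · exact gbinom_eq_zero_of_lt (by omega) (by omega)

/-- Chu–Vandermonde, with the antidiagonal of `(k + j - n).toNat` indexed by `m`. -/
lemma gbinom_add_eq_sum_Icc (k j n : ℤ) (h : n ≤ k + j) :
    gbinom (k + j) (k + j - n).toNat
      = ∑ m ∈ Icc (n - k) j, gbinom k (k + m - n).toNat * gbinom j (j - m).toNat := by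
  rw [gbinom_eq_ringChoose, Int.cast_add, Ring.add_choose_eq _ (Commute.all _ _)]
  symm
  refine sum_bij' (fun m _ => ((k + m - n).toNat, (j - m).toNat))
    (fun p _ => (p.1 : ℤ) + n - k) ?_ ?_ ?_ ?_ ?_
  · intro m hm
    rw [mem_Icc] at hm
    rw [HasAntidiagonal.mem_antidiagonal]
    omega
  · intro p hp
    rw [HasAntidiagonal.mem_antidiagonal] at hp
    rw [mem_Icc]
    omega
  · intro m hm
    rw [mem_Icc] at hm
    omega
  · intro p hp
    rw [HasAntidiagonal.mem_antidiagonal] at hp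
    ext <;> simp only <;> omega
  · intro m _
    simp only [gbinom_eq_ringChoose]

lemma iterate_map_rat_smul {M : Type*} [AddCommGroup M] [Module ℚ M] (d : M →+ M) (s : ℕ)
    (c : ℚ) (x : M) : d^[s] (c • x) = c • d^[s] x :=
  map_rat_smul ((show AddMonoid.End M from d) ^ s) c x

lemma iterate_map_sum {ι M : Type*} [AddCommMonoid M] (d : M →+ M) (s : ℕ) (t : Finset ι)
    (f : ι → M) : d^[s] (∑ i ∈ t, f i) = ∑ i ∈ t, d^[s] (f i) :=
  map_sum ((show AddMonoid.End M from d) ^ s) f t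

lemma finsum_eq_sum_Icc {M : Type*} [AddCommMonoid M] {f : ℤ → M} {a b : ℤ}
    (hf : ∀ n, n < a ∨ b < n → f n = 0) : ∑ᶠ n, f n = ∑ n ∈ Icc a b, f n :=
  finsum_eq_sum_of_support_subset f fun n hn => by
    by_contra hn'
    rw [coe_Icc, Set.mem_Icc] at hn'
    exact hn (hf n (by omega))

lemma Units.mul_finsum {α M : Type*} [Semiring M] (u : Mˣ) (f : α → M) :
    (u : M) * ∑ᶠ a, f a = ∑ᶠ a, u * f a :=
  (AddMonoidHom.mulLeft (u : M)).map_finsum_of_injective u.isUnit.mul_right_injective f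

namespace PDO

variable {R : Type} [CommRing R] [Algebra ℚ R] {d : R →+ R}

lemma adj_coeff_eq_sum {B : PDO R d} {M : ℤ} (hB : ∀ n, M < n → B.coeff n = 0) (n : ℤ) :
    (adj B).coeff n = ∑ j ∈ Icc n M,
      ((-1 : ℚ) ^ j * gbinom j (j - n).toNat) • d^[(j - n).toNat] (B.coeff j) := by
  refine (finsum_eq_sum_Icc fun j hj => ?_).trans (sum_congr rfl fun j hj => dif_pos ?_)
  · split_ifs with hjn
    · rw [hB j (by omega), iterate_map_zero, smul_zero]
    · rfl
  · rw [mem_Icc] at hj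
    omega

lemma adj_coeff_eq_zero {B : PDO R d} {M : ℤ} (hB : ∀ n, M < n → B.coeff n = 0) {n : ℤ}
    (hn : M < n) : (adj B).coeff n = 0 := by
  rw [adj_coeff_eq_sum hB, Icc_eq_empty (by omega), sum_empty]

lemma mul_coeff_eq_sum {A B : PDO R d} {N M : ℤ} (hA : ∀ n, N < n → A.coeff n = 0)
    (hB : ∀ n, M < n → B.coeff n = 0) (n : ℤ) :
    (A * B).coeff n = ∑ k ∈ Icc (n - M) N, ∑ m ∈ Icc (n - k) M,
      A.coeff k * (gbinom k (k + m - n).toNat • d^[(k + m - n).toNat] (B.coeff m)) := by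
  have hterm : ∀ k m : ℤ, N < k ∨ k + m < n ∨ M < m →
      (if _ : 0 ≤ k + m - n then
        A.coeff k * (gbinom k (k + m - n).toNat • d^[(k + m - n).toNat] (B.coeff m))
      else 0) = 0 := by
    intro k m hkm
    split_ifs with hle
    · rcases hkm with hk | hkm | hm
      · rw [hA k hk, zero_mul]
      · omega
      · rw [hB m hm, iterate_map_zero, smul_zero, mul_zero]
    · rfl
  refine (finsum_eq_sum_Icc fun k hk => finsum_eq_zero_of_forall_eq_zero fun m =>
    hterm k m (by omega)).trans (sum_congr rfl fun k _ => ?_)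
  refine (finsum_eq_sum_Icc fun m hm => hterm k m (by omega)).trans
    (sum_congr rfl fun m hm => dif_pos ?_)
  rw [mem_Icc] at hm
  omega

/-- The left-hand side is `Res_∂ (∂ᵏ · B*)`, written out through the product and adjoint
formulas. -/
lemma sum_Icc_gbinom_smul_iterate_adj_coeff {B : PDO R d} {M : ℤ}
    (hB : ∀ n, M < n → B.coeff n = 0) {k : ℤ} (hk : -1 - M ≤ k) :
    ∑ m ∈ Icc (-1 - k) M, gbinom k (k + m + 1).toNat • d^[(k + m + 1).toNat] ((adj B).coeff m)
      = (-1 : ℚ) ^ (-1 - k) • B.coeff (-1 - k) := by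
  set b : ℤ → R := fun j => (-1 : ℚ) ^ j • d^[(k + j + 1).toNat] (B.coeff j)
  calc _ = ∑ m ∈ Icc (-1 - k) M, ∑ j ∈ Icc m M,
          (gbinom k (k + m + 1).toNat * gbinom j (j - m).toNat) • b j := by
        refine sum_congr rfl fun m hm => ?_
        rw [adj_coeff_eq_sum hB, iterate_map_sum, smul_sum]
        refine sum_congr rfl fun j hj => ?_
        rw [mem_Icc] at hm hj
        rw [iterate_map_rat_smul, ← Function.iterate_add_apply,
          show (k + m + 1).toNat + (j - m).toNat = (k + j + 1).toNat by omega]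
        simp only [b, smul_smul]
        congr 1
        ring
    _ = ∑ j ∈ Icc (-1 - k) M, ∑ m ∈ Icc (-1 - k) j,
          (gbinom k (k + m + 1).toNat * gbinom j (j - m).toNat) • b j :=
        sum_comm' fun m j => by simp only [mem_Icc]; omega
    _ = ∑ j ∈ Icc (-1 - k) M, if j = -1 - k then b j else 0 := by
        refine sum_congr rfl fun j hj => ?_
        rw [mem_Icc] at hj
        have hvdm := gbinom_add_eq_sum_Icc k j (-1) (by omega)
        simp only [sub_neg_eq_add] at hvdm
        rw [← sum_smul, ← hvdm, gbinom_add_one_toNat (by omega), ite_smul, one_smul, zero_smul]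
        exact if_congr (by omega) rfl rfl
    _ = _ := by
        rw [sum_ite_eq', if_pos (by rw [mem_Icc]; omega)]
        simp only [b, show (k + (-1 - k) + 1).toNat = 0 by omega, Function.iterate_zero_apply]

theorem res_mul_adj (A B : PDO R d) :
    res (A * adj B) = ∑ᶠ k, (-1 : ℚ) ^ (-1 - k) • (A.coeff k * B.coeff (-1 - k)) := by
  obtain ⟨N, hA⟩ := A.bdd
  obtain ⟨M, hB⟩ := B.bdd
  rw [res, mul_coeff_eq_sum hA (fun _ => adj_coeff_eq_zero hB) (-1),
    finsum_eq_sum_Icc (a := -1 - M) (b := N)]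
  · refine sum_congr rfl fun k hk => ?_
    rw [mem_Icc] at hk
    simp only [sub_neg_eq_add]
    rw [← mul_sum, sum_Icc_gbinom_smul_iterate_adj_coeff hB hk.1, mul_smul_comm]
  · intro k hk
    rcases hk with hk | hk
    · rw [hB (-1 - k) (by omega), mul_zero, smul_zero]
    · rw [hA k hk, zero_mul, smul_zero]

end PDO

theorem residue_of_symbol_product_general
    (R : Type) [CommRing R] [Algebra ℚ R] (d : R →+ R)
    (h : Rˣ)
    (P Q : PDO R d) :
    (∑ᶠ i : ℤ, ((-1 : ℚ) ^ (-1 - i)) • (P.coeff i * Q.coeff (-1 - i)))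
      = (h : R) * PDO.res (PDO.ofSymbol h P * PDO.adj (PDO.ofSymbol h Q)) := by
  rw [PDO.res_mul_adj, Units.mul_finsum]
  refine finsum_congr fun k => ?_
  have hpow : (h : R) * ((h ^ k : Rˣ) : R) * ((h ^ (-1 - k) : Rˣ) : R) = 1 := by
    rw [← Units.val_mul, ← Units.val_mul, show h * h ^ k * h ^ (-1 - k) = 1 by group,
      Units.val_one]
  show _ = (h : R) * ((-1 : ℚ) ^ (-1 - k) •
    (P.coeff k * ((h ^ k : Rˣ) : R) * (Q.coeff (-1 - k) * ((h ^ (-1 - k) : Rˣ) : R))))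
  rw [mul_smul_comm]
  congr 1
  linear_combination -(P.coeff k * Q.coeff (-1 - k)) * hpow

/-- `Res_λ P(λ)Q(−λ) dλ = h · Res_∂ (P(h∂) · Q(h∂)*)`, i.e.
`Σ_(i+j=−1) (−1)ʲ pᵢ qⱼ = h · Res_∂ (P(h∂) · Q(h∂)*)`. -/
theorem residue_of_symbol_product
    (R : Type) [CommRing R] [Algebra ℚ R] (d : R →+ R)
    (hd : Leibniz d) (h : Rˣ) (hdh : d (h : R) = 0)
    (P Q : PDO R d) :
    (∑ᶠ i : ℤ, ((-1 : ℚ) ^ (-1 - i)) • (P.coeff i * Q.coeff (-1 - i)))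
      = (h : R) * PDO.res (PDO.ofSymbol h P * PDO.adj (PDO.ofSymbol h Q)) :=
  residue_of_symbol_product_general R d h P Q
end

section
/- Fix n ≥ 0 and let aₙ = 1/(2n+1)!!. Suppose P ∈ Ψ(R) with P₊ = 1 satisfies the Sato–Wilson equation D(P) = −(aₙ/h) · ( P (h∂)^{2n+1} P⁻¹ )₋ · P, and suppose that L := P · h²∂² · P⁻¹ satisfies L₋ = 0. Then, with 𝔏 := P (h∂)^{2n+1} P⁻¹, the Lax equation D(L) = (aₙ/h) [ 𝔏₊ , L ] holds, where [·,·] is the commutator in Ψ(R). -/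
open scoped BigOperators

/-!
Because `D` is a derivation of `Ψ(R)` commuting with `∂` and killing `h²∂²`, differentiating
`L = P·h²∂²·P⁻¹` gives `D(L) = [D(P)·P⁻¹, L]`. The Sato–Wilson equation says
`D(P)·P⁻¹ = −(aₙ/h)·𝔏₋`, and `𝔏 = 𝔏₊ + 𝔏₋` commutes with `L` since `(h∂)^(2n+1)` commutes with
`h²∂²`; hence `[−𝔏₋, L] = [𝔏₊, L]`. Most of the work is the associativity of the product of
`Ψ(R)`: both `(A·B)·C` and `A·(B·C)` expand into the same quadruple sum, the second one after the
iterated Leibniz rule and the Chu–Vandermonde identity for generalized binomial coefficients.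
-/

namespace gbinom

theorem eq_choose (k : ℤ) (l : ℕ) : gbinom k l = Ring.choose (k : ℚ) l := by
  rw [Ring.choose_eq_smul, ← Polynomial.aeval_eq_smeval, Polynomial.aeval_def,
    Polynomial.eval₂_eq_eval_map, descPochhammer_map, descPochhammer_eval_eq_prod_range, gbinom,
    smul_eq_mul, div_eq_inv_mul]

@[simp]
theorem zero_right (k : ℤ) : gbinom k 0 = 1 := by
  simp [eq_choose]

theorem zero_left {l : ℕ} (hl : 0 < l) : gbinom 0 l = 0 := by
  simpa [eq_choose] using Ring.choose_zero_pos ℚ hl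

theorem mul_choose (k : ℤ) (a b : ℕ) :
    gbinom k (a + b) * (a + b).choose a = gbinom k a * gbinom (k - a) b := by
  have := Ring.choose_smul_choose (k : ℚ) (Nat.le_add_right a b)
  rw [nsmul_eq_mul, Nat.add_sub_cancel_left] at this
  simpa [eq_choose, mul_comm] using this

theorem vandermonde (x y : ℤ) (b : ℕ) :
    ∑ j ∈ Finset.range (b + 1), gbinom x j * gbinom y (b - j) = gbinom (x + y) b := by
  rw [eq_choose, Int.cast_add, Ring.add_choose_eq b (Commute.all _ _),
    Finset.Nat.sum_antidiagonal_eq_sum_range_succ_mk]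
  simp [eq_choose]

theorem mul_eq_sum (x y : ℤ) (α β : ℕ) :
    gbinom x α * gbinom (x + y - α) β =
      ∑ j ∈ Finset.range (β + 1), gbinom x (α + j) * gbinom y (β - j) * (α + j).choose α := by
  rw [show x + y - α = x - α + y by ring, ← vandermonde, Finset.mul_sum]
  refine Finset.sum_congr rfl fun j _ => ?_
  rw [mul_right_comm, mul_choose, mul_assoc]

/-- Reindexing `(t, i, s) ↦ (i, t - i + s)`, summed against the Chu–Vandermonde identity. -/
theorem sum_range_triangle {M : Type*} [AddCommGroup M] [Module ℚ M] (x y : ℤ) {L : ℕ}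
    {X : ℕ → ℕ → M} (hX : ∀ α β, L ≤ α + β → X α β = 0) :
    ∑ t ∈ Finset.range L, ∑ s ∈ Finset.range L, ∑ i ∈ Finset.range (t + 1),
        (gbinom x t * gbinom y s * t.choose i) • X i (t - i + s) =
      ∑ α ∈ Finset.range L, ∑ β ∈ Finset.range L,
        (gbinom x α * gbinom (x + y - α) β) • X α β := by
  set g : ℕ → ℕ → ℕ → M := fun α j s =>
    (gbinom x (α + j) * gbinom y s * (α + j).choose α) • X α (j + s) with hg
  have hg0 : ∀ α j s, L ≤ α + j + s → g α j s = 0 := fun α j s h => by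
    simp only [hg, hX α (j + s) (by omega), smul_zero]
  have lhs : ∀ t ∈ Finset.range L, ∑ s ∈ Finset.range L, ∑ i ∈ Finset.range (t + 1),
      (gbinom x t * gbinom y s * t.choose i) • X i (t - i + s) =
      ∑ i ∈ Finset.range (t + 1), ∑ s ∈ Finset.range L, g i (t - i) s := fun t _ => by
    rw [Finset.sum_comm]
    refine Finset.sum_congr rfl fun i hi => Finset.sum_congr rfl fun s _ => ?_
    simp only [hg, Nat.add_sub_cancel' (Finset.mem_range_succ_iff.1 hi)]
  have rhs : ∀ α ∈ Finset.range L, ∑ β ∈ Finset.range L,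
      (gbinom x α * gbinom (x + y - α) β) • X α β =
      ∑ β ∈ Finset.range L, ∑ j ∈ Finset.range (β + 1), g α j (β - j) := fun α _ => by
    refine Finset.sum_congr rfl fun β _ => ?_
    rw [mul_eq_sum, Finset.sum_smul]
    refine Finset.sum_congr rfl fun j hj => ?_
    simp only [hg, Nat.add_sub_cancel' (Finset.mem_range_succ_iff.1 hj)]
  rw [Finset.sum_congr rfl lhs, Finset.sum_congr rfl rhs]
  refine (Finset.sum_range_diag_flip L fun i j => ∑ s ∈ Finset.range L, g i j s).trans
    (Finset.sum_congr rfl fun α _ => ((Finset.sum_range_diag_flip L (g α)).trans ?_).symm)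
  rw [← Finset.sum_subset (Finset.range_subset_range.2 (Nat.sub_le L α)) fun j _ hj =>
    Finset.sum_eq_zero fun s _ => hg0 α j s (by simp at hj; omega)]
  refine Finset.sum_congr rfl fun j _ =>
    Finset.sum_subset (Finset.range_subset_range.2 (Nat.sub_le L j)) fun s _ hs => ?_
  exact hg0 α j s (by simp at hs; omega)

end gbinom

theorem Finset.sum_comp_add_of_support_subset {M : Type*} [AddCommMonoid M] {f : ℤ → M}
    {s t : Finset ℤ} (c : ℤ) (hs : Function.support f ⊆ s)
    (ht : Function.support (fun w => f (w + c)) ⊆ t) :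
    ∑ m ∈ s, f m = ∑ w ∈ t, f (w + c) := by
  rw [← finsum_eq_sum_of_support_subset f hs, ← finsum_eq_sum_of_support_subset _ ht]
  exact (finsum_comp_equiv (Equiv.addRight c)).symm

namespace AddMonoidHom

variable {M : Type*} [AddCommMonoid M] {d : M →+ M}

theorem iterate_eq_zero_of_apply_eq_zero {r : M} (hr : d r = 0) {j : ℕ} (hj : 0 < j) :
    d^[j] r = 0 := by
  obtain ⟨j, rfl⟩ := Nat.exists_eq_add_of_lt hj
  rw [zero_add, Function.iterate_succ_apply, hr, iterate_map_zero]

theorem iterate_map_sum {ι : Type*} (s : Finset ι) (f : ι → M) (j : ℕ) :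
    d^[j] (∑ i ∈ s, f i) = ∑ i ∈ s, d^[j] (f i) :=
  map_sum ((show AddMonoid.End M from d) ^ j) f s

theorem iterate_map_rat_smul {M : Type*} [AddCommGroup M] [Module ℚ M] {d : M →+ M} (q : ℚ)
    (a : M) (j : ℕ) : d^[j] (q • a) = q • d^[j] a :=
  Function.Commute.iterate_left (fun a => map_rat_smul d q a) j a

end AddMonoidHom

namespace Leibniz

variable {R : Type} [CommRing R] [Algebra ℚ R] {d : R →+ R}

theorem map_mul (hd : Leibniz d) (a b : R) : d (a * b) = a * d b + b * d a :=
  hd a b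

theorem map_one (hd : Leibniz d) : d 1 = 0 := by
  simpa using hd.map_mul 1 1

theorem map_pow_eq_zero (hd : Leibniz d) {r : R} (hr : d r = 0) (m : ℕ) : d (r ^ m) = 0 := by
  induction m with
  | zero => simpa using hd.map_one
  | succ m ih => rw [pow_succ, hd.map_mul, ih, hr, mul_zero, mul_zero, add_zero]

theorem map_units_inv_eq_zero (hd : Leibniz d) {u : Rˣ} (hu : d u = 0) : d ↑u⁻¹ = 0 := by
  have := hd.map_mul u ↑u⁻¹
  rw [Units.mul_inv, hd.map_one, hu, mul_zero, add_zero] at this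
  exact (Units.mul_right_eq_zero u).1 this.symm

theorem iterate_map_mul (hd : Leibniz d) (j : ℕ) (a b : R) :
    d^[j] (a * b) = ∑ i ∈ Finset.range (j + 1), j.choose i • (d^[i] a * d^[j - i] b) := by
  induction j with
  | zero => simp
  | succ j ih =>
    rw [Finset.sum_choose_succ_nsmul (fun i k => d^[i] a * d^[k] b), Function.iterate_succ_apply',
      ih, map_sum, ← Finset.sum_add_distrib]
    refine Finset.sum_congr rfl fun i hi => ?_
    rw [map_nsmul, hd.map_mul, ← smul_add, Nat.sub_add_comm (Finset.mem_range_succ_iff.1 hi)]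
    simp only [Function.iterate_succ_apply']
    ring_nf

end Leibniz

section Ring

variable {A : Type*} [Ring A]

theorem Commute.conj_of_mul_eq_one {X Y P Q : A} (h : Commute X Y) (hQP : Q * P = 1) :
    Commute (P * X * Q) (P * Y * Q) := by
  have key : ∀ U V : A, P * U * Q * (P * V * Q) = P * (U * V) * Q := fun U V => by
    rw [mul_assoc (P * U), ← mul_assoc Q, ← mul_assoc Q, hQP, one_mul, ← mul_assoc, mul_assoc P]
  rw [Commute, SemiconjBy, key, key, h.eq]

theorem map_conj_eq_lie_of_leibniz {δ : A → A} (hδ : ∀ x y, δ (x * y) = δ x * y + x * δ y)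
    {P Q M : A} (hPQ : P * Q = 1) (hQP : Q * P = 1) (hM : δ M = 0) :
    δ (P * M * Q) = ⁅δ P * Q, P * M * Q⁆ := by
  have hone : δ 1 = 0 := by simpa using hδ 1 1
  have hQ : δ Q = -(Q * (δ P * Q)) := by
    have := hδ P Q
    rw [hPQ, hone] at this
    rw [eq_neg_iff_add_eq_zero, ← one_mul (δ Q), ← hQP, mul_assoc, ← mul_add, add_comm, ← this,
      mul_zero]
  rw [hδ, hδ, hM, mul_zero, add_zero, hQ, Ring.lie_def]
  simp only [mul_neg, mul_assoc, ← mul_assoc Q P, hQP, one_mul, sub_eq_add_neg]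

end Ring

namespace PDO

variable {R : Type} [CommRing R] [Algebra ℚ R] {d : R →+ R}

@[simp] theorem coeff_zero (n : ℤ) : (0 : PDO R d).coeff n = 0 := rfl
@[simp] theorem coeff_add (A B : PDO R d) (n : ℤ) : (A + B).coeff n = A.coeff n + B.coeff n := rfl
@[simp] theorem coeff_sub (A B : PDO R d) (n : ℤ) : (A - B).coeff n = A.coeff n - B.coeff n :=
  (sub_eq_add_neg _ _).symm
@[simp] theorem coeff_smul (q : ℚ) (A : PDO R d) (n : ℤ) : (q • A).coeff n = q • A.coeff n := rfl
@[simp] theorem coeff_mapHom (D : R →+ R) (A : PDO R d) (n : ℤ) :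
    (mapHom D A).coeff n = D (A.coeff n) := rfl
theorem coeff_mono (r : R) (k n : ℤ) :
    (mono r k : PDO R d).coeff n = if n = k then r else 0 := rfl

instance : Module ℚ (PDO R d) where
  one_smul A := ext' (funext fun n => one_smul ℚ (A.coeff n))
  mul_smul p q A := ext' (funext fun n => mul_smul p q (A.coeff n))
  smul_zero q := ext' (funext fun _ => smul_zero q)
  smul_add q A B := ext' (funext fun n => smul_add q (A.coeff n) (B.coeff n))
  add_smul p q A := ext' (funext fun n => add_smul p q (A.coeff n))
  zero_smul A := ext' (funext fun n => zero_smul ℚ (A.coeff n))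

def VanishesAbove (A : PDO R d) (N : ℤ) : Prop := ∀ k, N < k → A.coeff k = 0

theorem VanishesAbove.mono {A : PDO R d} {N N' : ℤ} (hA : A.VanishesAbove N) (h : N ≤ N') :
    A.VanishesAbove N' := fun k hk => hA k (h.trans_lt hk)

theorem exists_vanishesAbove₂ (A B : PDO R d) : ∃ N, A.VanishesAbove N ∧ B.VanishesAbove N := by
  obtain ⟨NA, hA⟩ := A.bdd
  obtain ⟨NB, hB⟩ := B.bdd
  exact ⟨max NA NB, VanishesAbove.mono hA (le_max_left _ _),
    VanishesAbove.mono hB (le_max_right _ _)⟩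

theorem exists_vanishesAbove₃ (A B C : PDO R d) :
    ∃ N, A.VanishesAbove N ∧ B.VanishesAbove N ∧ C.VanishesAbove N := by
  obtain ⟨N, hA, hB⟩ := exists_vanishesAbove₂ A B
  obtain ⟨NC, hC⟩ := C.bdd
  exact ⟨max N NC, hA.mono (le_max_left _ _), hB.mono (le_max_left _ _),
    VanishesAbove.mono hC (le_max_right _ _)⟩

theorem VanishesAbove.add {A B : PDO R d} {N : ℤ} (hA : A.VanishesAbove N)
    (hB : B.VanishesAbove N) : (A + B).VanishesAbove N := fun k hk => by
  simp [hA k hk, hB k hk]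

theorem VanishesAbove.smul {A : PDO R d} {N : ℤ} (hA : A.VanishesAbove N) (q : ℚ) :
    (q • A).VanishesAbove N := fun k hk => by
  simp [hA k hk]

theorem VanishesAbove.mapHom {A : PDO R d} {N : ℤ} (hA : A.VanishesAbove N) (D : R →+ R) :
    (mapHom D A).VanishesAbove N := fun k hk => by
  simp [hA k hk]

theorem mono_vanishesAbove (r : R) (k : ℤ) : (mono r k : PDO R d).VanishesAbove k :=
  fun _ hn => if_neg hn.ne'

def mulTerm (A B : PDO R d) (n k : ℤ) (l : ℕ) : R :=
  A.coeff k * (gbinom k l • d^[l] (B.coeff (n - k + l)))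

section Product

variable {A B : PDO R d} {NA NB : ℤ}

theorem coeff_mul_eq_sum (hA : A.VanishesAbove NA) (hB : B.VanishesAbove NB) (n : ℤ)
    {s : Finset ℤ} (hs : Finset.Icc (n - NB) NA ⊆ s) {L : ℕ} (hL : NA + NB - n < L) :
    (A * B).coeff n = ∑ k ∈ s, ∑ l ∈ Finset.range L, mulTerm A B n k l := by
  have inner : ∀ k, (∑ᶠ m : ℤ, if _ : 0 ≤ k + m - n then
      A.coeff k * (gbinom k (k + m - n).toNat • d^[(k + m - n).toNat] (B.coeff m)) else 0) =
      ∑ l ∈ Finset.range L, mulTerm A B n k l := by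
    intro k
    by_cases hk : A.coeff k = 0
    · simp [hk, mulTerm]
    have hkA : k ≤ NA := not_lt.1 fun h => hk (hA k h)
    rw [finsum_eq_sum_of_support_subset _ (s := (Finset.range L).image fun l : ℕ => n - k + l) ?_,
      Finset.sum_image fun _ _ _ _ h => by simpa using h]
    · refine Finset.sum_congr rfl fun l _ => ?_
      rw [dif_pos (by omega), mulTerm, show k + (n - k + l) - n = l by ring, Int.toNat_natCast]
    · intro m hm
      rw [Function.mem_support] at hm
      have hkm : 0 ≤ k + m - n := not_not.1 fun h => hm (dif_neg h)
      rw [dif_pos hkm] at hm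
      have hmB : m ≤ NB := not_lt.1 fun h => hm (by rw [hB m h, iterate_map_zero, smul_zero,
        mul_zero])
      simp only [Finset.coe_image, Finset.coe_range, Set.mem_image, Set.mem_Iio]
      exact ⟨(k + m - n).toNat, by omega, by omega⟩
  show ∑ᶠ k : ℤ, ∑ᶠ m : ℤ, _ = _
  rw [finsum_congr inner, finsum_eq_sum_of_support_subset _ fun k hk => hs ?_]
  obtain ⟨l, -, hl⟩ := Finset.exists_ne_zero_of_sum_ne_zero hk
  have hkA : k ≤ NA := not_lt.1 fun h => hl (by rw [mulTerm, hA k h, zero_mul])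
  have hkB : n - k + l ≤ NB := not_lt.1 fun h => hl (by rw [mulTerm, hB _ h, iterate_map_zero,
    smul_zero, mul_zero])
  rw [Finset.mem_Icc]
  omega

theorem VanishesAbove.mul (hA : A.VanishesAbove NA) (hB : B.VanishesAbove NB) :
    (A * B).VanishesAbove (NA + NB) := fun n hn => by
  rw [coeff_mul_eq_sum hA hB n (s := ∅) (fun k hk => by rw [Finset.mem_Icc] at hk; omega)
    (L := 0) (by omega), Finset.sum_empty]

theorem coeff_mul_eq_sum_Icc {N : ℤ} (hA : A.VanishesAbove N) (hB : B.VanishesAbove N) (n : ℤ) :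
    (A * B).coeff n = ∑ k ∈ Finset.Icc (n - N) N,
      ∑ l ∈ Finset.range ((2 * N - n).toNat + 1), mulTerm A B n k l :=
  coeff_mul_eq_sum hA hB n subset_rfl (by omega)

end Product

protected theorem mul_add (A B C : PDO R d) : A * (B + C) = A * B + A * C := by
  refine ext' (funext fun n => ?_)
  obtain ⟨N, hA, hB, hC⟩ := exists_vanishesAbove₃ A B C
  simp only [coeff_add, coeff_mul_eq_sum_Icc hA (hB.add hC), coeff_mul_eq_sum_Icc hA hB,
    coeff_mul_eq_sum_Icc hA hC, ← Finset.sum_add_distrib, mulTerm, iterate_map_add, smul_add,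
    mul_add]

protected theorem add_mul (A B C : PDO R d) : (A + B) * C = A * C + B * C := by
  refine ext' (funext fun n => ?_)
  obtain ⟨N, hA, hB, hC⟩ := exists_vanishesAbove₃ A B C
  simp only [coeff_add, coeff_mul_eq_sum_Icc (hA.add hB) hC, coeff_mul_eq_sum_Icc hA hC,
    coeff_mul_eq_sum_Icc hB hC, ← Finset.sum_add_distrib, mulTerm, coeff_add, add_mul]

protected theorem smul_mul (q : ℚ) (A B : PDO R d) : (q • A) * B = q • (A * B) := by
  refine ext' (funext fun n => ?_)
  obtain ⟨N, hA, hB⟩ := exists_vanishesAbove₂ A B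
  simp only [coeff_smul, coeff_mul_eq_sum_Icc (hA.smul q) hB, coeff_mul_eq_sum_Icc hA hB,
    Finset.smul_sum, mulTerm, smul_mul_assoc]

protected theorem mul_smul (q : ℚ) (A B : PDO R d) : A * (q • B) = q • (A * B) := by
  refine ext' (funext fun n => ?_)
  obtain ⟨N, hA, hB⟩ := exists_vanishesAbove₂ A B
  simp only [coeff_smul, coeff_mul_eq_sum_Icc hA (hB.smul q), coeff_mul_eq_sum_Icc hA hB,
    Finset.smul_sum, mulTerm, AddMonoidHom.iterate_map_rat_smul, smul_comm (gbinom _ _) q,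
    mul_smul_comm]

protected theorem zero_mul (A : PDO R d) : 0 * A = 0 := by
  simpa using PDO.smul_mul 0 0 A

protected theorem mul_zero (A : PDO R d) : A * 0 = 0 := by
  simpa using PDO.mul_smul 0 A 0

theorem mapHom_mul {D : R →+ R} (hD : Leibniz D) (hDd : ∀ r, D (d r) = d (D r))
    (A B : PDO R d) : mapHom D (A * B) = mapHom D A * B + A * mapHom D B := by
  refine ext' (funext fun n => ?_)
  obtain ⟨N, hA, hB⟩ := exists_vanishesAbove₂ A B
  simp only [coeff_add, coeff_mapHom, coeff_mul_eq_sum_Icc hA hB,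
    coeff_mul_eq_sum_Icc hA (hB.mapHom D), coeff_mul_eq_sum_Icc (hA.mapHom D) hB, map_sum,
    ← Finset.sum_add_distrib, mulTerm, hD.map_mul, map_rat_smul,
    (Function.Commute.iterate_right hDd _).eq, add_comm, mul_comm]

theorem coeff_const_mul (r : R) (A : PDO R d) (n : ℤ) :
    (const r * A).coeff n = r * A.coeff n := by
  obtain ⟨N, hA⟩ := A.bdd
  rw [const, coeff_mul_eq_sum (mono_vanishesAbove r 0) hA n (s := Finset.Icc (min (n - N) 0) 0)
    (L := (N - n).toNat + 1) (Finset.Icc_subset_Icc (min_le_left _ _) le_rfl) (by omega),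
    Finset.sum_eq_single_of_mem 0 (by simp), Finset.sum_eq_single_of_mem 0 (by simp)]
  · simp [mulTerm, coeff_mono]
  · intro l _ hl
    rw [mulTerm, gbinom.zero_left (Nat.pos_of_ne_zero hl), zero_smul, mul_zero]
  · intro k _ hk
    simp [mulTerm, coeff_mono, hk]

theorem coeff_mul_mono {b : R} (hb : d b = 0) (A : PDO R d) (j n : ℤ) :
    (A * mono b j).coeff n = A.coeff (n - j) * b := by
  obtain ⟨N, hA⟩ := A.bdd
  rw [coeff_mul_eq_sum hA (mono_vanishesAbove b j) n (s := Finset.Icc (n - j) (max N (n - j)))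
    (L := (N + j - n).toNat + 1) (Finset.Icc_subset_Icc le_rfl (le_max_left _ _)) (by omega),
    Finset.sum_eq_single_of_mem (n - j) (by simp), Finset.sum_eq_single_of_mem 0 (by simp)]
  · simp [mulTerm, coeff_mono]
  · intro l _ hl
    rw [mulTerm, coeff_mono]
    split_ifs
    · rw [AddMonoidHom.iterate_eq_zero_of_apply_eq_zero hb (Nat.pos_of_ne_zero hl), smul_zero,
        mul_zero]
    · rw [iterate_map_zero, smul_zero, mul_zero]
  · intro k _ hk
    refine Finset.sum_eq_zero fun l _ => ?_
    rw [mulTerm, coeff_mono]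
    split_ifs with h
    · rw [AddMonoidHom.iterate_eq_zero_of_apply_eq_zero hb (by omega), smul_zero, mul_zero]
    · rw [iterate_map_zero, smul_zero, mul_zero]

theorem mono_mul_mono {b : R} (hb : d b = 0) (a : R) (k j : ℤ) :
    (mono a k : PDO R d) * mono b j = mono (a * b) (k + j) :=
  ext' (funext fun n => by
    simp only [coeff_mul_mono hb, coeff_mono, sub_eq_iff_eq_add]
    split_ifs <;> simp)

theorem mul_const_comm {r : R} (hr : d r = 0) (A : PDO R d) : A * const r = const r * A :=
  ext' (funext fun n => by
    rw [const, coeff_mul_mono hr, ← const, coeff_const_mul, sub_zero, mul_comm])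

protected theorem one_mul (A : PDO R d) : 1 * A = A :=
  ext' (funext fun n => (coeff_const_mul 1 A n).trans (one_mul _))

protected theorem mul_one (hd : Leibniz d) (A : PDO R d) : A * 1 = A :=
  ext' (funext fun n => by
    rw [show (1 : PDO R d) = mono 1 0 from rfl, coeff_mul_mono hd.map_one, sub_zero, mul_one])

section Associativity

variable {A B C : PDO R d} {N : ℤ}

def tripleTerm (A B C : PDO R d) (n k w : ℤ) (α β : ℕ) : R :=
  A.coeff k * (d^[α] (B.coeff w) * d^[β] (C.coeff (n - k - w + α + β)))

noncomputable def tripleSum (A B C : PDO R d) (n N : ℤ) : R :=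
  ∑ k ∈ Finset.Icc (n - 2 * N) N, ∑ w ∈ Finset.Icc (n - 2 * N) N,
    ∑ α ∈ Finset.range ((3 * N - n).toNat + 1), ∑ β ∈ Finset.range ((3 * N - n).toNat + 1),
      (gbinom k α * gbinom (k + w - α) β) • tripleTerm A B C n k w α β

theorem le_of_smul_mul_ne_zero (hA : A.VanishesAbove N) (hB : B.VanishesAbove N)
    (hC : C.VanishesAbove N) {c : ℚ} {k w q : ℤ} {α β : ℕ}
    (h : c • (A.coeff k * (d^[α] (B.coeff w) * d^[β] (C.coeff q))) ≠ 0) :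
    k ≤ N ∧ w ≤ N ∧ q ≤ N := by
  refine ⟨not_lt.1 fun hk => h ?_, not_lt.1 fun hw => h ?_, not_lt.1 fun hq => h ?_⟩
  · rw [hA k hk, zero_mul, smul_zero]
  · rw [hB w hw, iterate_map_zero, zero_mul, mul_zero, smul_zero]
  · rw [hC q hq, iterate_map_zero, mul_zero, mul_zero, smul_zero]

theorem mulTerm_mul_left (hA : A.VanishesAbove N) (hB : B.VanishesAbove N) {n m : ℤ}
    (hm : n - N ≤ m) (β : ℕ) :
    mulTerm (A * B) C n m β = ∑ k ∈ Finset.Icc (n - 2 * N) N,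
      ∑ α ∈ Finset.range ((3 * N - n).toNat + 1), (gbinom k α * gbinom m β) •
        (A.coeff k * (d^[α] (B.coeff (m - k + α)) * d^[β] (C.coeff (n - m + β)))) := by
  rw [mulTerm, coeff_mul_eq_sum hA hB m (s := Finset.Icc (n - 2 * N) N)
    (L := (3 * N - n).toNat + 1) (Finset.Icc_subset_Icc (by omega) le_rfl) (by omega),
    Finset.sum_mul]
  refine Finset.sum_congr rfl fun k _ => ?_
  rw [Finset.sum_mul]
  refine Finset.sum_congr rfl fun α _ => ?_
  simp only [mulTerm, mul_smul_comm, smul_mul_assoc, smul_smul, mul_assoc, mul_comm (gbinom m β)]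

theorem coeff_mul_mul_left (hA : A.VanishesAbove N) (hB : B.VanishesAbove N)
    (hC : C.VanishesAbove N) (n : ℤ) : (A * B * C).coeff n = tripleSum A B C n N := by
  rw [coeff_mul_eq_sum (hA.mul hB) hC n subset_rfl (L := (3 * N - n).toNat + 1) (by omega),
    Finset.sum_congr rfl fun m hm => Finset.sum_congr rfl fun β _ =>
      mulTerm_mul_left hA hB (Finset.mem_Icc.1 hm).1 β,
    Finset.sum_congr rfl fun m _ => Finset.sum_comm, Finset.sum_comm, tripleSum]
  refine Finset.sum_congr rfl fun k _ => ?_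
  rw [Finset.sum_congr rfl fun m _ => Finset.sum_comm, Finset.sum_comm,
    Finset.sum_comm (s := Finset.Icc _ _)]
  refine Finset.sum_congr rfl fun α _ => ?_
  rw [Finset.sum_comp_add_of_support_subset (k - α) ?_ ?_]
  · refine Finset.sum_congr rfl fun w _ => Finset.sum_congr rfl fun β _ => ?_
    rw [tripleTerm, show w + (k - α) - k + α = w by ring,
      show n - (w + (k - α)) + β = n - k - w + α + β by ring, show w + (k - α) = k + w - α by ring]
  · intro m hm
    obtain ⟨β, -, hβ⟩ := Finset.exists_ne_zero_of_sum_ne_zero hm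
    have := le_of_smul_mul_ne_zero hA hB hC hβ
    rw [Finset.mem_coe, Finset.mem_Icc]
    omega
  · intro w hw
    obtain ⟨β, -, hβ⟩ := Finset.exists_ne_zero_of_sum_ne_zero hw
    have := le_of_smul_mul_ne_zero hA hB hC hβ
    rw [Finset.mem_coe, Finset.mem_Icc]
    omega

theorem mulTerm_mul_right (hd : Leibniz d) (hB : B.VanishesAbove N) (hC : C.VanishesAbove N)
    {n k : ℤ} (hk : k ≤ N) (t : ℕ) :
    mulTerm A (B * C) n k t = ∑ p ∈ Finset.Icc (n - 2 * N) N,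
      ∑ s ∈ Finset.range ((3 * N - n).toNat + 1), ∑ i ∈ Finset.range (t + 1),
        (gbinom k t * gbinom p s * t.choose i) • tripleTerm A B C n k p i (t - i + s) := by
  rw [mulTerm, coeff_mul_eq_sum hB hC (n - k + t) (s := Finset.Icc (n - 2 * N) N)
    (L := (3 * N - n).toNat + 1) (Finset.Icc_subset_Icc (by omega) le_rfl) (by omega),
    AddMonoidHom.iterate_map_sum, Finset.smul_sum, Finset.mul_sum]
  refine Finset.sum_congr rfl fun p _ => ?_
  rw [AddMonoidHom.iterate_map_sum, Finset.smul_sum, Finset.mul_sum]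
  refine Finset.sum_congr rfl fun s _ => ?_
  rw [mulTerm, mul_smul_comm (gbinom p s), AddMonoidHom.iterate_map_rat_smul, hd.iterate_map_mul,
    Finset.smul_sum, Finset.smul_sum, Finset.mul_sum]
  refine Finset.sum_congr rfl fun i hi => ?_
  have hit : i ≤ t := Finset.mem_range_succ_iff.1 hi
  rw [← Function.iterate_add_apply, tripleTerm, ← Nat.cast_smul_eq_nsmul ℚ, smul_smul, smul_smul,
    mul_smul_comm, mul_assoc, mul_comm (gbinom p s)]
  congr 5
  omega

theorem coeff_mul_mul_right (hd : Leibniz d) (hA : A.VanishesAbove N) (hB : B.VanishesAbove N)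
    (hC : C.VanishesAbove N) (n : ℤ) : (A * (B * C)).coeff n = tripleSum A B C n N := by
  rw [coeff_mul_eq_sum hA (hB.mul hC) n (s := Finset.Icc (n - 2 * N) N)
    (L := (3 * N - n).toNat + 1) (Finset.Icc_subset_Icc (by omega) le_rfl) (by omega), tripleSum]
  refine Finset.sum_congr rfl fun k hk => ?_
  rw [Finset.sum_congr rfl fun t _ => mulTerm_mul_right hd hB hC (Finset.mem_Icc.1 hk).2 t,
    Finset.sum_comm]
  refine Finset.sum_congr rfl fun p hp => gbinom.sum_range_triangle k p fun α β hαβ => ?_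
  rw [Finset.mem_Icc] at hk hp
  rw [tripleTerm, hC _ (by omega), iterate_map_zero, mul_zero, mul_zero]

end Associativity

protected theorem mul_assoc (hd : Leibniz d) (A B C : PDO R d) : A * B * C = A * (B * C) := by
  obtain ⟨N, hA, hB, hC⟩ := exists_vanishesAbove₃ A B C
  exact ext' (funext fun n => by
    rw [coeff_mul_mul_left hA hB hC, coeff_mul_mul_right hd hA hB hC])

/-- Not a global instance: associativity and `A * 1 = A` need `d` to be a derivation. -/
noncomputable abbrev ring (hd : Leibniz d) : Ring (PDO R d) :=
  { (inferInstance : AddCommGroup (PDO R d)) with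
    mul := (· * ·)
    one := 1
    mul_assoc := PDO.mul_assoc hd
    one_mul := PDO.one_mul
    mul_one := PDO.mul_one hd
    zero_mul := PDO.zero_mul
    mul_zero := PDO.mul_zero
    left_distrib := PDO.mul_add
    right_distrib := PDO.add_mul
    npow := fun n A => A ^ n
    npow_zero := fun _ => rfl
    npow_succ := fun _ _ => rfl }

@[simp] theorem mono_zero (k : ℤ) : (mono 0 k : PDO R d) = 0 :=
  ext' (funext fun n => by simp [coeff_mono])

theorem mapHom_mono (D : R →+ R) (r : R) (k : ℤ) :
    mapHom D (mono r k : PDO R d) = mono (D r) k :=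
  ext' (funext fun n => by by_cases hn : n = k <;> simp [coeff_mono, hn])

theorem Lop_zero (h : Rˣ) : (Lop h 0 : PDO R d) = mono ((h : R) ^ 2) 2 :=
  ext' (funext fun n => by
    show (if n = 2 then (h : R) ^ 2 else if n = 0 then 2 * 0 else 0) = if n = 2 then _ else 0
    split_ifs <;> simp)

theorem negp_eq_sub_pos (A : PDO R d) : negp A = A - pos A :=
  ext' (funext fun n => by
    rw [coeff_sub]
    show (if n < 0 then A.coeff n else 0) = A.coeff n - if 0 ≤ n then A.coeff n else 0
    split_ifs <;> first | omega | simp)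

end PDO

theorem sato_wilson_implies_lax_general
    (R : Type) [CommRing R] [Algebra ℚ R] (d : R →+ R)
    (hd : Leibniz d) (h : Rˣ) (hdh : d (h : R) = 0)
    (D : R →+ R) (hD : Leibniz D) (hDd : ∀ r : R, D (d r) = d (D r)) (hDh : D (h : R) = 0)
    (n : ℕ) (P Pinv : PDO R d)
    (hPinv : P * Pinv = 1 ∧ Pinv * P = 1)
    (hSW : PDO.mapHom D P
      = -(kdvA n • (PDO.const ((h⁻¹ : Rˣ) : R)
          * (PDO.negp (P * PDO.hdel h ^ (2 * n + 1) * Pinv) * P)))) :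
    PDO.mapHom D (P * PDO.Lop h 0 * Pinv)
      = kdvA n • (PDO.const ((h⁻¹ : Rˣ) : R)
          * PDO.comm (PDO.pos (P * PDO.hdel h ^ (2 * n + 1) * Pinv)) (P * PDO.Lop h 0 * Pinv)) := by
  let _ : Ring (PDO R d) := PDO.ring hd
  obtain ⟨hPQ, hQP⟩ := hPinv
  set N := P * PDO.hdel h ^ (2 * n + 1) * Pinv
  set L := P * PDO.Lop h 0 * Pinv
  set e : PDO R d := PDO.const ((h⁻¹ : Rˣ) : R)
  have hDL : PDO.mapHom D L = ⁅PDO.mapHom D P * Pinv, L⁆ :=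
    map_conj_eq_lie_of_leibniz (PDO.mapHom_mul hD hDd) hPQ hQP
      (by rw [PDO.Lop_zero, PDO.mapHom_mono, hD.map_pow_eq_zero hDh, PDO.mono_zero])
  have hDP : PDO.mapHom D P * Pinv = -(kdvA n • (e * PDO.negp N)) := by
    rw [hSW, neg_mul, smul_mul_assoc, mul_assoc, mul_assoc, hPQ, mul_one]
  have hNL : Commute N L := by
    refine Commute.conj_of_mul_eq_one (Commute.pow_left ?_ _) hQP
    rw [Commute, SemiconjBy, PDO.Lop_zero, PDO.hdel, PDO.mono_mul_mono (hd.map_pow_eq_zero hdh 2),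
      PDO.mono_mul_mono hdh, mul_comm, add_comm]
  have heL : Commute e L := (PDO.mul_const_comm (hd.map_units_inv_eq_zero hdh) L).symm
  have hlie : L * (N - N.pos) - (N - N.pos) * L = N.pos * L - L * N.pos := by
    rw [mul_sub, sub_mul, hNL.eq]
    abel
  rw [hDL, hDP, PDO.negp_eq_sub_pos, PDO.comm, Ring.lie_def, neg_mul, mul_neg, sub_neg_eq_add,
    smul_mul_assoc, mul_smul_comm, neg_add_eq_sub, ← smul_sub, ← mul_assoc L e, ← heL.eq,
    mul_assoc e L, mul_assoc e _ L, ← mul_sub, hlie]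

/-- Sato–Wilson implies Lax: if `P₊ = 1` satisfies `D(P) = −(aₙ/h)(P(h∂)^(2n+1)P⁻¹)₋ P`
and `L := P·h²∂²·P⁻¹` satisfies `L₋ = 0`, then with `𝔏 := P(h∂)^(2n+1)P⁻¹` one has
`D(L) = (aₙ/h)[𝔏₊, L]`. -/
theorem sato_wilson_implies_lax
    (R : Type) [CommRing R] [Algebra ℚ R] (d : R →+ R)
    (hd : Leibniz d) (h : Rˣ) (hdh : d (h : R) = 0)
    (D : R →+ R) (hD : Leibniz D) (hDd : ∀ r : R, D (d r) = d (D r)) (hDh : D (h : R) = 0)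
    (n : ℕ) (P Pinv : PDO R d) (hP : PDO.pos P = 1)
    (hPinv : P * Pinv = 1 ∧ Pinv * P = 1)
    (hSW : PDO.mapHom D P
      = -(kdvA n • (PDO.const ((h⁻¹ : Rˣ) : R)
          * (PDO.negp (P * PDO.hdel h ^ (2 * n + 1) * Pinv) * P))))
    (hL : PDO.negp (P * PDO.Lop h 0 * Pinv) = 0) :
    PDO.mapHom D (P * PDO.Lop h 0 * Pinv)
      = kdvA n • (PDO.const ((h⁻¹ : Rˣ) : R)
          * PDO.comm (PDO.pos (P * PDO.hdel h ^ (2 * n + 1) * Pinv)) (P * PDO.Lop h 0 * Pinv)) :=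
  sato_wilson_implies_lax_general R d hd h hdh D hD hDd hDh n P Pinv hPinv hSW
end
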